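/- arXiv:2109.07720 — 2 statements merged into one kernel-verified Lean document; each statement's English description precedes it below -/
import Mathlib

section
/- Let β ∈ (0,1), q ∈ (1,∞] with β > 1/q, and s ∈ [0,T). Suppose θ : Δ → ℝⁿ is measurable and there exist δ₀ ∈ (0, (T-s)/2), a modulus of continuity ω, and functions θ₀, θ₁ ∈ L^q(s,T) such that for every t ∈ [T-2δ₀, T]: |θ(t,τ) - θ(T,τ)| ≤ ω(T-t) θ₁(τ) and |θ(t,τ)| ≤ θ₀(τ) for a.e. τ ∈ [s,t). Then the function η(t) = ∫_s^t θ(t,τ)/(t-τ)^{1-β} dτ is continuous at t = T, i.e., η(t) → η(T) as t → T⁻. -/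
open MeasureTheory Real Set Filter
open scoped ENNReal Topology

/-!
With `k c τ = (c - τ) ^ (β - 1)`, split
`η t - η T = ∫ₛᵗ (k t - k T) • θ t + ∫ₛᵗ k T • (θ t - θ T) - ∫ₜᵀ k T • θ T`
and apply Hölder with the exponent `p` conjugate to `q` to each piece. This bounds
`‖η t - η T‖` by `‖k t - k T‖_{L^p(s,t)} ‖θ₀‖_q + ω (T - t) ‖k T‖_{L^p(s,T)} ‖θ₁‖_q
+ ‖k T‖_{L^p(t,T)} ‖θ₀‖_q`. The condition `β > 1/q` says exactly `(β - 1) p > -1`, so the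
`p`-th powers of the kernels are integrable with explicit primitives. Since
`(a - b) ^ p ≤ a ^ p - b ^ p` for `a ≥ b ≥ 0`, the first kernel norm is at most
`(∫ₛᵗ (k t ^ p - k T ^ p)) ^ (1/p)`, which tends to `0` together with the third one.
-/

section Holder

variable {α E : Type*} [MeasurableSpace α] {μ : Measure α} [NormedAddCommGroup E]
  [NormedSpace ℝ E] {p q : ℝ≥0∞} [p.HolderTriple q 1] {k g : α → ℝ} {f : α → E}

theorem integrable_smul_of_norm_le (hk : MemLp k p μ) (hg : MemLp g q μ)
    (hf : AEStronglyMeasurable f μ) (hfg : ∀ᵐ x ∂μ, ‖f x‖ ≤ g x) :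
    Integrable (fun x => k x • f x) μ :=
  memLp_one_iff_integrable.mp <|
    (hg.of_le hf (hfg.mono fun _ h => h.trans (le_abs_self _))).smul hk

theorem enorm_integral_smul_le_eLpNorm_mul (hk : AEStronglyMeasurable k μ)
    (hg : AEStronglyMeasurable g μ) (hfg : ∀ᵐ x ∂μ, ‖f x‖ ≤ g x) :
    ‖∫ x, k x • f x ∂μ‖ₑ ≤ eLpNorm k p μ * eLpNorm g q μ :=
  calc ‖∫ x, k x • f x ∂μ‖ₑ ≤ ∫⁻ x, ‖k x • f x‖ₑ ∂μ := enorm_integral_le_lintegral_enorm _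
    _ ≤ ∫⁻ x, ‖k x • g x‖ₑ ∂μ := lintegral_mono_ae <| hfg.mono fun x h => by
          rw [enorm_smul, enorm_smul]
          gcongr
          exact enorm_le_iff_norm_le.mpr (h.trans (le_abs_self _))
    _ = eLpNorm (k • g) 1 μ := eLpNorm_one_eq_lintegral_enorm.symm
    _ ≤ eLpNorm k p μ * eLpNorm g q μ := eLpNorm_smul_le_mul_eLpNorm hg hk

end Holder

theorem tendsto_eLpNorm_of_tendsto_lintegral {ι α E : Type*} [MeasurableSpace α]
    [NormedAddCommGroup E] {l : Filter ι} {p : ℝ≥0∞} (hp0 : p ≠ 0) (hp : p ≠ ∞)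
    {f : ι → α → E} {μ : ι → Measure α} {L : ℝ≥0∞}
    (h : Tendsto (fun i => ∫⁻ x, ‖f i x‖ₑ ^ p.toReal ∂μ i) l (𝓝 L)) :
    Tendsto (fun i => eLpNorm (f i) p (μ i)) l (𝓝 (L ^ (1 / p.toReal))) := by
  simp_rw [eLpNorm_eq_lintegral_rpow_enorm_toReal hp0 hp]
  exact (ENNReal.continuous_rpow_const.tendsto L).comp h

section Splitting

variable {E : Type*} [NormedAddCommGroup E] [NormedSpace ℝ E] {p q : ℝ≥0∞} [p.HolderTriple q 1]

theorem setIntegral_Ioo_add_setIntegral_Ioo {f : ℝ → E} {a b c : ℝ} (hab : a ≤ b) (hbc : b ≤ c)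
    (hf : IntegrableOn f (Ioo a c)) :
    (∫ x in Ioo a b, f x) + ∫ x in Ioo b c, f x = ∫ x in Ioo a c, f x := by
  simp only [← integral_Ioc_eq_integral_Ioo, ← intervalIntegral.integral_of_le, hab, hbc,
    hab.trans hbc]
  exact intervalIntegral.integral_add_adjacent_intervals
    ((intervalIntegrable_iff_integrableOn_Ioo_of_le hab).mpr
      (hf.mono_set (Ioo_subset_Ioo_right hbc)))
    ((intervalIntegrable_iff_integrableOn_Ioo_of_le hbc).mpr
      (hf.mono_set (Ioo_subset_Ioo_left hab)))

theorem enorm_setIntegral_Ioo_smul_sub_le {a b c : ℝ} (hab : a ≤ b) (hbc : b ≤ c)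
    {k₁ k₂ g₀ g₁ : ℝ → ℝ} {f₁ f₂ : ℝ → E}
    (hk₁ : MemLp k₁ p (volume.restrict (Ioo a b))) (hk₂ : MemLp k₂ p (volume.restrict (Ioo a c)))
    (hg₀ : MemLp g₀ q (volume.restrict (Ioo a c))) (hg₁ : MemLp g₁ q (volume.restrict (Ioo a c)))
    (hf₁ : AEStronglyMeasurable f₁ (volume.restrict (Ioo a b)))
    (hf₂ : AEStronglyMeasurable f₂ (volume.restrict (Ioo a c)))
    (hf₁g₀ : ∀ᵐ τ ∂volume.restrict (Ioo a b), ‖f₁ τ‖ ≤ g₀ τ)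
    (hf₂g₀ : ∀ᵐ τ ∂volume.restrict (Ioo a c), ‖f₂ τ‖ ≤ g₀ τ)
    (hf₁₂ : ∀ᵐ τ ∂volume.restrict (Ioo a b), ‖f₁ τ - f₂ τ‖ ≤ g₁ τ) :
    ‖(∫ τ in Ioo a b, k₁ τ • f₁ τ) - ∫ τ in Ioo a c, k₂ τ • f₂ τ‖ₑ ≤
      eLpNorm (fun τ => k₁ τ - k₂ τ) p (volume.restrict (Ioo a b)) *
          eLpNorm g₀ q (volume.restrict (Ioo a c)) +
        eLpNorm k₂ p (volume.restrict (Ioo a c)) * eLpNorm g₁ q (volume.restrict (Ioo a c)) +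
        eLpNorm k₂ p (volume.restrict (Ioo b c)) * eLpNorm g₀ q (volume.restrict (Ioo a c)) := by
  have hab_ac : volume.restrict (Ioo a b) ≤ volume.restrict (Ioo a c) :=
    Measure.restrict_mono (Ioo_subset_Ioo_right hbc) le_rfl
  have hbc_ac : volume.restrict (Ioo b c) ≤ volume.restrict (Ioo a c) :=
    Measure.restrict_mono (Ioo_subset_Ioo_left hab) le_rfl
  have hk₂ab := hk₂.mono_measure hab_ac
  have hdiff : Integrable (fun τ => (k₁ τ - k₂ τ) • f₁ τ) (volume.restrict (Ioo a b)) :=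
    integrable_smul_of_norm_le (hk₁.sub hk₂ab) (hg₀.mono_measure hab_ac) hf₁ hf₁g₀
  have hvar : Integrable (fun τ => k₂ τ • (f₁ τ - f₂ τ)) (volume.restrict (Ioo a b)) :=
    integrable_smul_of_norm_le hk₂ab (hg₁.mono_measure hab_ac)
      (hf₁.sub (hf₂.mono_measure hab_ac)) hf₁₂
  have hk₂f₂ : Integrable (fun τ => k₂ τ • f₂ τ) (volume.restrict (Ioo a c)) :=
    integrable_smul_of_norm_le hk₂ hg₀ hf₂ hf₂g₀
  have hsplit : (∫ τ in Ioo a b, k₁ τ • f₁ τ) - ∫ τ in Ioo a c, k₂ τ • f₂ τ =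
      (∫ τ in Ioo a b, (k₁ τ - k₂ τ) • f₁ τ) + (∫ τ in Ioo a b, k₂ τ • (f₁ τ - f₂ τ)) -
        ∫ τ in Ioo b c, k₂ τ • f₂ τ := by
    have hk₁f₁ : ∫ τ in Ioo a b, k₁ τ • f₁ τ =
        ∫ τ in Ioo a b, ((k₁ τ - k₂ τ) • f₁ τ + k₂ τ • (f₁ τ - f₂ τ)) + k₂ τ • f₂ τ := by
      simp only [sub_smul, smul_sub, sub_add_sub_cancel, sub_add_cancel]
    rw [← setIntegral_Ioo_add_setIntegral_Ioo hab hbc hk₂f₂, hk₁f₁,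
      integral_add ?_ (hk₂f₂.mono_measure hab_ac), integral_add hdiff hvar]
    · abel
    · exact hdiff.add hvar
  rw [hsplit]
  calc _ ≤ ‖∫ τ in Ioo a b, (k₁ τ - k₂ τ) • f₁ τ‖ₑ + ‖∫ τ in Ioo a b, k₂ τ • (f₁ τ - f₂ τ)‖ₑ +
        ‖∫ τ in Ioo b c, k₂ τ • f₂ τ‖ₑ := enorm_sub_le.trans (by gcongr; exact enorm_add_le ..)
    _ ≤ _ := by
      gcongr
      · exact (enorm_integral_smul_le_eLpNorm_mul (hk₁.sub hk₂ab).1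
          (hg₀.1.mono_measure hab_ac) hf₁g₀).trans
          (mul_le_mul_right (eLpNorm_mono_measure _ hab_ac) _)
      · exact (enorm_integral_smul_le_eLpNorm_mul hk₂ab.1 (hg₁.1.mono_measure hab_ac) hf₁₂).trans
          (mul_le_mul' (eLpNorm_mono_measure _ hab_ac) (eLpNorm_mono_measure _ hab_ac))
      · exact (enorm_integral_smul_le_eLpNorm_mul (hk₂.1.mono_measure hbc_ac)
          (hg₀.1.mono_measure hbc_ac) (ae_mono hbc_ac hf₂g₀)).trans
          (mul_le_mul_right (eLpNorm_mono_measure _ hbc_ac) _)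

end Splitting

section Continuity

variable {E : Type*} [NormedAddCommGroup E] [NormedSpace ℝ E] {p q : ℝ≥0∞} [p.HolderTriple q 1]

theorem tendsto_setIntegral_Ioo_smul_nhdsLT {s T : ℝ} (hsT : s < T) {k : ℝ → ℝ → ℝ}
    {θ : ℝ → ℝ → E} {θ₀ θ₁ c : ℝ → ℝ}
    (hk : ∀ᶠ t in 𝓝[<] T, MemLp (k t) p (volume.restrict (Ioo s t)))
    (hkT : MemLp (k T) p (volume.restrict (Ioo s T)))
    (hk_sub : Tendsto (fun t => eLpNorm (fun τ => k t τ - k T τ) p (volume.restrict (Ioo s t)))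
      (𝓝[<] T) (𝓝 0))
    (hk_tail : Tendsto (fun t => eLpNorm (k T) p (volume.restrict (Ioo t T))) (𝓝[<] T) (𝓝 0))
    (hθ : ∀ t, AEStronglyMeasurable (θ t) volume)
    (hθ₀ : MemLp θ₀ q (volume.restrict (Ioo s T))) (hθ₁ : MemLp θ₁ q (volume.restrict (Ioo s T)))
    (hc : Tendsto c (𝓝[<] T) (𝓝 0))
    (hθ_le : ∀ᶠ t in 𝓝[≤] T, ∀ᵐ τ ∂volume.restrict (Ioo s t), ‖θ t τ‖ ≤ θ₀ τ)
    (hθ_sub : ∀ᶠ t in 𝓝[<] T, ∀ᵐ τ ∂volume.restrict (Ioo s t), ‖θ t τ - θ T τ‖ ≤ c t * θ₁ τ) :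
    Tendsto (fun t => ∫ τ in Ioo s t, k t τ • θ t τ) (𝓝[<] T)
      (𝓝 (∫ τ in Ioo s T, k T τ • θ T τ)) := by
  set N₀ := eLpNorm θ₀ q (volume.restrict (Ioo s T))
  set N₁ := eLpNorm θ₁ q (volume.restrict (Ioo s T))
  have hbound : Tendsto (fun t => eLpNorm (fun τ => k t τ - k T τ) p (volume.restrict (Ioo s t)) *
      N₀ + eLpNorm (k T) p (volume.restrict (Ioo s T)) * (‖c t‖ₑ * N₁) +
      eLpNorm (k T) p (volume.restrict (Ioo t T)) * N₀) (𝓝[<] T) (𝓝 0) := by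
    have hc' : Tendsto (fun t => ‖c t‖ₑ) (𝓝[<] T) (𝓝 0) := by simpa using hc.enorm
    simpa using ((ENNReal.Tendsto.mul_const hk_sub (.inr hθ₀.eLpNorm_ne_top)).add
      (ENNReal.Tendsto.const_mul (ENNReal.Tendsto.mul_const hc' (.inr hθ₁.eLpNorm_ne_top))
        (.inr hkT.eLpNorm_ne_top))).add
      (ENNReal.Tendsto.mul_const hk_tail (.inr hθ₀.eLpNorm_ne_top))
  rw [tendsto_iff_edist_tendsto_0]
  refine tendsto_of_tendsto_of_tendsto_of_le_of_le' tendsto_const_nhds hbound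
    (.of_forall fun _ => zero_le) ?_
  filter_upwards [hk, hθ_sub, nhdsWithin_mono _ Iio_subset_Iic_self hθ_le, Ioo_mem_nhdsLT hsT]
    with t hkt hsub hle ht
  rw [edist_eq_enorm_sub, ← eLpNorm_const_smul]
  exact enorm_setIntegral_Ioo_smul_sub_le ht.1.le ht.2.le hkt hkT hθ₀ (hθ₁.const_mul (c t))
    (hθ t).restrict (hθ T).restrict hle (hθ_le.self_of_nhdsWithin self_mem_Iic) hsub

end Continuity

section Kernel

variable {γ r : ℝ} {p : ℝ≥0∞}

theorem setLIntegral_Ioo_enorm_sub_rpow_rpow (hr : 0 ≤ r) (hγr : -1 < γ * r) {a b c : ℝ}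
    (hab : a ≤ b) (hbc : b ≤ c) :
    ∫⁻ τ in Ioo a b, ‖(c - τ) ^ γ‖ₑ ^ r =
      ENNReal.ofReal (((c - a) ^ (γ * r + 1) - (c - b) ^ (γ * r + 1)) / (γ * r + 1)) := by
  have hint : IntegrableOn (fun τ => (c - τ) ^ (γ * r)) (Ioo a b) := by
    have h := intervalIntegral.intervalIntegrable_rpow' (a := c - b) (b := c - a) hγr
    have h' := h.comp_sub_left c
    simp only [sub_sub_cancel] at h'
    exact (intervalIntegrable_iff_integrableOn_Ioo_of_le hab).mp h'.symm
  have h := intervalIntegral.integral_comp_sub_left (fun x => x ^ (γ * r)) c (a := a) (b := b)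
  rw [integral_rpow (Or.inl hγr), intervalIntegral.integral_of_le hab,
    integral_Ioc_eq_integral_Ioo] at h
  rw [← h, ofReal_integral_eq_lintegral_ofReal hint]
  · refine setLIntegral_congr_fun measurableSet_Ioo fun τ hτ => ?_
    have hτc : 0 ≤ c - τ := by linarith [hτ.2]
    rw [Real.enorm_eq_ofReal (by positivity), ENNReal.ofReal_rpow_of_nonneg (by positivity) hr,
      Real.rpow_mul hτc]
  · filter_upwards [ae_restrict_mem measurableSet_Ioo] with τ hτ
    exact Real.rpow_nonneg (by linarith [hτ.2]) _

theorem setLIntegral_Ioo_enorm_sub_rpow_rpow_ne_top (hr : 0 ≤ r) (hγr : -1 < γ * r) {a b c : ℝ}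
    (hab : a ≤ b) (hbc : b ≤ c) : ∫⁻ τ in Ioo a b, ‖(c - τ) ^ γ‖ₑ ^ r ≠ ∞ := by
  rw [setLIntegral_Ioo_enorm_sub_rpow_rpow hr hγr hab hbc]
  exact ENNReal.ofReal_ne_top

theorem tendsto_setLIntegral_Ioo_enorm_sub_rpow_rpow {ι : Type*} {l : Filter ι} (hr : 0 ≤ r)
    (hγr : -1 < γ * r) {a b c : ι → ℝ} {a₀ b₀ c₀ : ℝ} (ha : Tendsto a l (𝓝 a₀))
    (hb : Tendsto b l (𝓝 b₀)) (hc : Tendsto c l (𝓝 c₀))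
    (habc : ∀ᶠ i in l, a i ≤ b i ∧ b i ≤ c i) (hab₀ : a₀ ≤ b₀) (hbc₀ : b₀ ≤ c₀) :
    Tendsto (fun i => ∫⁻ τ in Ioo (a i) (b i), ‖(c i - τ) ^ γ‖ₑ ^ r) l
      (𝓝 (∫⁻ τ in Ioo a₀ b₀, ‖(c₀ - τ) ^ γ‖ₑ ^ r)) := by
  have hκ : 0 ≤ γ * r + 1 := by linarith
  rw [setLIntegral_Ioo_enorm_sub_rpow_rpow hr hγr hab₀ hbc₀]
  refine Tendsto.congr' (habc.mono fun i hi =>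
    (setLIntegral_Ioo_enorm_sub_rpow_rpow hr hγr hi.1 hi.2).symm) ?_
  refine ENNReal.tendsto_ofReal (Tendsto.div_const (Tendsto.sub ?_ ?_) _)
  · exact (hc.sub ha).rpow_const (Or.inr hκ)
  · exact (hc.sub hb).rpow_const (Or.inr hκ)

theorem setLIntegral_Ioo_enorm_sub_rpow_sub_le (hγ : γ ≤ 0) (hr : 1 ≤ r) {a b c : ℝ} (hbc : b ≤ c)
    (hfin : ∫⁻ τ in Ioo a b, ‖(c - τ) ^ γ‖ₑ ^ r ≠ ∞) :
    ∫⁻ τ in Ioo a b, ‖(b - τ) ^ γ - (c - τ) ^ γ‖ₑ ^ r ≤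
      (∫⁻ τ in Ioo a b, ‖(b - τ) ^ γ‖ₑ ^ r) - ∫⁻ τ in Ioo a b, ‖(c - τ) ^ γ‖ₑ ^ r := by
  refine ENNReal.le_sub_of_add_le_right hfin ?_
  rw [← lintegral_add_right _ (by fun_prop)]
  refine setLIntegral_mono (by fun_prop) fun τ hτ => ?_
  have hbτ : 0 < b - τ := by linarith [hτ.2]
  have hcτ : 0 ≤ (c - τ) ^ γ := Real.rpow_nonneg (by linarith) _
  have hmono : (c - τ) ^ γ ≤ (b - τ) ^ γ := Real.rpow_le_rpow_of_nonpos hbτ (by linarith) hγ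
  calc ‖(b - τ) ^ γ - (c - τ) ^ γ‖ₑ ^ r + ‖(c - τ) ^ γ‖ₑ ^ r
      ≤ (‖(b - τ) ^ γ - (c - τ) ^ γ‖ₑ + ‖(c - τ) ^ γ‖ₑ) ^ r := ENNReal.add_rpow_le_rpow_add _ _ hr
    _ = ‖(b - τ) ^ γ‖ₑ ^ r := by
      rw [Real.enorm_of_nonneg (sub_nonneg.mpr hmono), Real.enorm_of_nonneg hcτ,
        ← ENNReal.ofReal_add (sub_nonneg.mpr hmono) hcτ, sub_add_cancel,
        Real.enorm_of_nonneg (hcτ.trans hmono)]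

theorem memLp_sub_rpow_Ioo (hp0 : p ≠ 0) (hp : p ≠ ∞) (hγ : -1 < γ * p.toReal) {a c : ℝ}
    (hac : a ≤ c) : MemLp (fun τ => (c - τ) ^ γ) p (volume.restrict (Ioo a c)) := by
  refine ⟨(by fun_prop : Measurable fun τ => (c - τ) ^ γ).aestronglyMeasurable, ?_⟩
  rw [eLpNorm_eq_lintegral_rpow_enorm_toReal hp0 hp]
  exact ENNReal.rpow_lt_top_of_nonneg (by positivity)
    (setLIntegral_Ioo_enorm_sub_rpow_rpow_ne_top ENNReal.toReal_nonneg hγ hac le_rfl)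

theorem tendsto_eLpNorm_sub_rpow_sub_sub_rpow (hγ0 : γ ≤ 0) (hp1 : 1 ≤ p) (hp : p ≠ ∞)
    (hγ : -1 < γ * p.toReal) {s T : ℝ} (hsT : s < T) :
    Tendsto (fun t => eLpNorm (fun τ => (t - τ) ^ γ - (T - τ) ^ γ) p (volume.restrict (Ioo s t)))
      (𝓝[<] T) (𝓝 0) := by
  have hp0 : p ≠ 0 := (zero_lt_one.trans_le hp1).ne'
  have hr : 0 ≤ p.toReal := ENNReal.toReal_nonneg
  have hr1 : 1 ≤ p.toReal := by simpa using ENNReal.toReal_mono hp hp1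
  have hid : Tendsto (fun t : ℝ => t) (𝓝[<] T) (𝓝 T) :=
    tendsto_nhdsWithin_of_tendsto_nhds tendsto_id
  have hs : Tendsto (fun _ : ℝ => s) (𝓝[<] T) (𝓝 s) := tendsto_const_nhds
  have hT : Tendsto (fun _ : ℝ => T) (𝓝[<] T) (𝓝 T) := tendsto_const_nhds
  have hnear : ∀ᶠ t in 𝓝[<] T, s ≤ t ∧ t ≤ T := by
    filter_upwards [Ioo_mem_nhdsLT hsT] with t ht using ⟨ht.1.le, ht.2.le⟩
  have hbound := ENNReal.Tendsto.sub
    (tendsto_setLIntegral_Ioo_enorm_sub_rpow_rpow hr hγ hs hid hid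
      (hnear.mono fun t ht => ⟨ht.1, le_rfl⟩) hsT.le le_rfl)
    (tendsto_setLIntegral_Ioo_enorm_sub_rpow_rpow hr hγ hs hid hT hnear hsT.le le_rfl)
    (Or.inl (setLIntegral_Ioo_enorm_sub_rpow_rpow_ne_top hr hγ hsT.le le_rfl))
  rw [tsub_self] at hbound
  have := tendsto_eLpNorm_of_tendsto_lintegral hp0 hp (tendsto_of_tendsto_of_tendsto_of_le_of_le'
    tendsto_const_nhds hbound (.of_forall fun _ => zero_le) (hnear.mono fun t ht =>
      setLIntegral_Ioo_enorm_sub_rpow_sub_le hγ0 hr1 ht.2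
        (setLIntegral_Ioo_enorm_sub_rpow_rpow_ne_top hr hγ ht.1 ht.2)))
  rwa [ENNReal.zero_rpow_of_pos (one_div_pos.mpr (ENNReal.toReal_pos hp0 hp))] at this

theorem tendsto_eLpNorm_sub_rpow_Ioo_left (hp0 : p ≠ 0) (hp : p ≠ ∞) (hγ : -1 < γ * p.toReal)
    (T : ℝ) :
    Tendsto (fun t => eLpNorm (fun τ => (T - τ) ^ γ) p (volume.restrict (Ioo t T)))
      (𝓝[<] T) (𝓝 0) := by
  have hid : Tendsto (fun t : ℝ => t) (𝓝[<] T) (𝓝 T) :=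
    tendsto_nhdsWithin_of_tendsto_nhds tendsto_id
  have := tendsto_eLpNorm_of_tendsto_lintegral hp0 hp
    (tendsto_setLIntegral_Ioo_enorm_sub_rpow_rpow ENNReal.toReal_nonneg hγ
      hid tendsto_const_nhds tendsto_const_nhds
      (eventually_nhdsWithin_of_forall fun t ht => ⟨le_of_lt ht, le_rfl⟩) le_rfl le_rfl)
  rwa [Ioo_self, Measure.restrict_empty, lintegral_zero_measure,
    ENNReal.zero_rpow_of_pos (one_div_pos.mpr (ENNReal.toReal_pos hp0 hp))] at this

end Kernel

theorem exists_holderConjugate_neg_one_lt {q : ℝ≥0∞} {β : ℝ} (hβ : β < 1)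
    (hβq : 1 / q < ENNReal.ofReal β) :
    ∃ p : ℝ≥0∞, p.HolderConjugate q ∧ p ≠ ∞ ∧ -1 < (β - 1) * p.toReal := by
  rw [one_div] at hβq
  have hq : 1 < q := ENNReal.inv_lt_one.mp (hβq.trans (ENNReal.ofReal_lt_one.mpr hβ))
  set p := q.conjExponent
  have : p.HolderConjugate q := (ENNReal.HolderConjugate.conjExponent hq.le).symm
  have hp : p ≠ ∞ := ((ENNReal.HolderConjugate.lt_top_iff_one_lt p q).mpr hq).ne
  refine ⟨p, this, hp, ?_⟩
  have hp₀ : 0 < p.toReal := ENNReal.toReal_pos (ENNReal.HolderConjugate.ne_zero p q) hp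
  have hsum : p.toReal⁻¹ + q⁻¹.toReal = 1 := by
    rw [← ENNReal.toReal_inv, ← ENNReal.toReal_add
      (ENNReal.inv_ne_top.mpr (ENNReal.HolderConjugate.ne_zero p q))
      (ENNReal.inv_ne_top.mpr (ENNReal.HolderConjugate.ne_zero q p)),
      ENNReal.HolderConjugate.inv_add_inv_eq_one, ENNReal.toReal_one]
  have hqβ : q⁻¹.toReal < β := ENNReal.toReal_lt_of_lt_ofReal hβq
  have : (1 - β) * p.toReal < 1 :=
    calc (1 - β) * p.toReal < p.toReal⁻¹ * p.toReal := by gcongr; linarith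
      _ = 1 := inv_mul_cancel₀ hp₀.ne'
  linarith

theorem stmt_3_general (n : ℕ) (T β : ℝ) (q : ℝ≥0∞)
    (hβ : β ∈ Set.Ioo (0:ℝ) 1)
    (hβq : 1 / q < ENNReal.ofReal β)
    (s : ℝ)
    (θ : ℝ → ℝ → EuclideanSpace ℝ (Fin n))
    (hmeas : Measurable (Function.uncurry θ))
    (δ₀ : ℝ) (hδ₀ : δ₀ ∈ Set.Ioo 0 ((T - s) / 2))
    (ω : ℝ → ℝ)
    (hω_cont : ContinuousOn ω (Set.Ici 0)) (hω0 : ω 0 = 0)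
    (θ₀ θ₁ : ℝ → ℝ)
    (hθ₀q : MemLp θ₀ q (volume.restrict (Set.Ioc s T)))
    (hθ₁q : MemLp θ₁ q (volume.restrict (Set.Ioc s T)))
    (hbd1 : ∀ t ∈ Set.Icc (T - 2 * δ₀) T,
      ∀ᵐ τ ∂(volume.restrict (Set.Ico s t)), ‖θ t τ - θ T τ‖ ≤ ω (T - t) * θ₁ τ)
    (hbd0 : ∀ t ∈ Set.Icc (T - 2 * δ₀) T,
      ∀ᵐ τ ∂(volume.restrict (Set.Ico s t)), ‖θ t τ‖ ≤ θ₀ τ) :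
    Tendsto (fun t => ∫ τ in Set.Ioo s t, ((t - τ) ^ (β - 1)) • θ t τ)
      (nhdsWithin T (Set.Iio T))
      (nhds (∫ τ in Set.Ioo s T, ((T - τ) ^ (β - 1)) • θ T τ)) := by
  obtain ⟨p, hpq, hp, hγ⟩ := exists_holderConjugate_neg_one_lt hβ.2 hβq
  have hp0 : p ≠ 0 := hpq.ne_zero
  have hδT : T - 2 * δ₀ < T := by linarith [hδ₀.1]
  have hsT : s < T := by linarith [hδ₀.2]
  have hΔ : volume.restrict (Ioo s T) ≤ volume.restrict (Ioc s T) :=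
    Measure.restrict_mono Ioo_subset_Ioc_self le_rfl
  have hω : Tendsto (fun t => ω (T - t)) (𝓝[<] T) (𝓝 0) := by
    have hlag : Tendsto (fun t => T - t) (𝓝[<] T) (𝓝[≥] 0) :=
      tendsto_nhdsWithin_iff.mpr
        ⟨((continuous_sub_left T).tendsto' T 0 (sub_self T)).mono_left nhdsWithin_le_nhds,
          eventually_nhdsWithin_of_forall fun t ht => mem_Ici.mpr (sub_nonneg.mpr (le_of_lt ht))⟩
    simpa [hω0, Function.comp_def] using (hω_cont 0 self_mem_Ici).tendsto.comp hlag
  refine tendsto_setIntegral_Ioo_smul_nhdsLT (k := fun t τ => (t - τ) ^ (β - 1)) hsT ?_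
    (memLp_sub_rpow_Ioo hp0 hp hγ hsT.le)
    (tendsto_eLpNorm_sub_rpow_sub_sub_rpow (by linarith [hβ.2]) hpq.one_le hp hγ hsT)
    (tendsto_eLpNorm_sub_rpow_Ioo_left hp0 hp hγ T)
    (fun t => hmeas.of_uncurry_left.aestronglyMeasurable)
    (hθ₀q.mono_measure hΔ) (hθ₁q.mono_measure hΔ) hω ?_ ?_
  · filter_upwards [Ioo_mem_nhdsLT hsT] with t ht using memLp_sub_rpow_Ioo hp0 hp hγ ht.1.le
  · filter_upwards [Icc_mem_nhdsLE hδT] with t ht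
    using ae_restrict_of_ae_restrict_of_subset Ioo_subset_Ico_self (hbd0 t ht)
  · filter_upwards [Icc_mem_nhdsLT hδT] with t ht
    using ae_restrict_of_ae_restrict_of_subset Ioo_subset_Ico_self (hbd1 t ht)

/-- Continuity at t = T of η(t) = ∫_s^t θ(t,τ)/(t-τ)^{1-β} dτ under a
    modulus-of-continuity assumption on θ near t = T. -/
theorem stmt_3 (n : ℕ) (T β : ℝ) (q : ℝ≥0∞)
    (hT : 0 < T) (hβ : β ∈ Set.Ioo (0:ℝ) 1)
    (hq : 1 < q) (hβq : 1 / q < ENNReal.ofReal β)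
    (s : ℝ) (hs : s ∈ Set.Ico 0 T)
    (θ : ℝ → ℝ → EuclideanSpace ℝ (Fin n))
    (hmeas : Measurable (Function.uncurry θ))
    (δ₀ : ℝ) (hδ₀ : δ₀ ∈ Set.Ioo 0 ((T - s) / 2))
    (ω : ℝ → ℝ) (hω_mono : StrictMonoOn ω (Set.Ici 0))
    (hω_cont : ContinuousOn ω (Set.Ici 0)) (hω0 : ω 0 = 0)
    (hω_nonneg : ∀ x ∈ Set.Ici (0:ℝ), 0 ≤ ω x)
    (θ₀ θ₁ : ℝ → ℝ)
    (hθ₀q : MemLp θ₀ q (volume.restrict (Set.Ioc s T)))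
    (hθ₁q : MemLp θ₁ q (volume.restrict (Set.Ioc s T)))
    (hbd1 : ∀ t ∈ Set.Icc (T - 2 * δ₀) T,
      ∀ᵐ τ ∂(volume.restrict (Set.Ico s t)), ‖θ t τ - θ T τ‖ ≤ ω (T - t) * θ₁ τ)
    (hbd0 : ∀ t ∈ Set.Icc (T - 2 * δ₀) T,
      ∀ᵐ τ ∂(volume.restrict (Set.Ico s t)), ‖θ t τ‖ ≤ θ₀ τ) :
    Tendsto (fun t => ∫ τ in Set.Ioo s t, ((t - τ) ^ (β - 1)) • θ t τ)
      (nhdsWithin T (Set.Iio T))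
      (nhds (∫ τ in Set.Ioo s T, ((T - τ) ^ (β - 1)) • θ T τ)) :=
  stmt_3_general n T β q hβ hβq s θ hmeas δ₀ hδ₀ ω hω_cont hω0 θ₀ θ₁ hθ₀q hθ₁q hbd1 hbd0
end

section
/- Let β ∈ (0,1), let M > 0, and let F_k : Δ → ℝ^{n×n} be measurable functions satisfying |F_k(t,s)| ≤ M^k (t-s)^{kβ-1} ∏_{j=1}^{k-1} B(β, jβ) for all k ≥ 1 and (t,s) ∈ Δ. Then for every δ > 0, the series Σ_{k=1}^∞ F_k(t,s) converges uniformly and absolutely on Δ_δ = {(t,s) ∈ Δ : t - s ≥ δ}. -/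
/-!
The Beta product telescopes to `Γ(β)^k / Γ(kβ)`, so on `Δ_δ` the `(k+1)`-st term is dominated by
`(c/δ) · c^k / Γ((k+1)β)` with `c = M Γ(β) T^β`. Log-convexity of `Γ` gives the Wendel-type bound
`Γ(y) / Γ(y+β) ≤ (1 + β/y) (y+β)^(-β) → 0`, so this majorant passes the ratio test, and the
Weierstrass M-test yields absolute and uniform convergence.
-/

open Real Filter

theorem prod_Icc_beta_eq_Gamma_pow_div_Gamma {β : ℝ} (hβ : 0 < β) (k : ℕ) :
    ∏ j ∈ Finset.Icc 1 k, Gamma β * Gamma ((j : ℝ) * β) / Gamma (β + (j : ℝ) * β) =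
      Gamma β ^ (k + 1) / Gamma (((k : ℝ) + 1) * β) := by
  induction k with
  | zero => simp [(Gamma_pos_of_pos hβ).ne']
  | succ k ih =>
    have hΓk := (Gamma_pos_of_pos (by positivity : 0 < ((k : ℝ) + 1) * β)).ne'
    have hΓk' := (Gamma_pos_of_pos (by positivity : 0 < β + ((k : ℝ) + 1) * β)).ne'
    rw [Finset.prod_Icc_succ_top (Nat.le_add_left 1 k), ih]
    push_cast
    rw [show ((k : ℝ) + 1 + 1) * β = β + ((k : ℝ) + 1) * β by ring]
    field_simp
    ring

theorem Gamma_add_one_le_Gamma_add_mul_rpow {y β : ℝ} (hy : 0 < y) (hβ0 : 0 < β) (hβ1 : β < 1) :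
    Gamma (y + 1) ≤ Gamma (y + β) * (y + β) ^ (1 - β) := by
  have hyβ : 0 < y + β := by linarith
  have hΓ : 0 < Gamma (y + β) := Gamma_pos_of_pos hyβ
  have hconvex := Gamma_mul_add_mul_le_rpow_Gamma_mul_rpow_Gamma hyβ (by linarith : 0 < y + β + 1)
    hβ0 (sub_pos.2 hβ1) (add_sub_cancel β 1)
  rw [show β * (y + β) + (1 - β) * (y + β + 1) = y + 1 by ring, Gamma_add_one hyβ.ne'] at hconvex
  calc Gamma (y + 1) ≤ Gamma (y + β) ^ β * ((y + β) * Gamma (y + β)) ^ (1 - β) := hconvex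
    _ = Gamma (y + β) * (y + β) ^ (1 - β) := by
      rw [mul_rpow hyβ.le hΓ.le, mul_left_comm, ← rpow_add hΓ, add_sub_cancel, rpow_one,
        mul_comm]

theorem tendsto_Gamma_div_Gamma_add_atTop {β : ℝ} (hβ0 : 0 < β) (hβ1 : β < 1) :
    Tendsto (fun y => Gamma y / Gamma (y + β)) atTop (nhds 0) := by
  have hupper : Tendsto (fun y => (1 + β / y) * (y + β) ^ (-β)) atTop (nhds 0) := by
    simpa using ((tendsto_id.const_div_atTop β).const_add 1).mul
      ((tendsto_rpow_neg_atTop hβ0).comp (tendsto_atTop_add_const_right _ β tendsto_id))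
  refine tendsto_of_tendsto_of_tendsto_of_le_of_le' tendsto_const_nhds hupper ?_ ?_
  · filter_upwards [eventually_gt_atTop 0] with y hy
    exact div_nonneg (Gamma_pos_of_pos hy).le (Gamma_pos_of_pos (by linarith)).le
  · filter_upwards [eventually_gt_atTop 0] with y hy
    have hyβ : 0 < y + β := by linarith
    have hwendel := Gamma_add_one_le_Gamma_add_mul_rpow hy hβ0 hβ1
    have hupper_eq : (1 + β / y) * (y + β) ^ (-β) * Gamma (y + β) =
        Gamma (y + β) * (y + β) ^ (1 - β) / y := by
      rw [rpow_sub hyβ, rpow_one, rpow_neg hyβ.le]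
      field_simp
    rw [div_le_iff₀ (Gamma_pos_of_pos hyβ), hupper_eq, le_div_iff₀ hy, mul_comm,
      ← Gamma_add_one hy.ne']
    exact hwendel

theorem summable_pow_div_Gamma_succ_mul (c : ℝ) {β : ℝ} (hβ0 : 0 < β) (hβ1 : β < 1) :
    Summable fun k : ℕ => c ^ k / Gamma (((k : ℝ) + 1) * β) := by
  refine summable_of_ratio_norm_eventually_le (r := 1 / 2) (by norm_num) ?_
  have hy : Tendsto (fun k : ℕ => ((k : ℝ) + 1) * β) atTop atTop :=
    (tendsto_atTop_add_const_right _ 1 tendsto_natCast_atTop_atTop).atTop_mul_const hβ0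
  have hratio := ((tendsto_Gamma_div_Gamma_add_atTop hβ0 hβ1).comp hy).const_mul |c|
  rw [mul_zero] at hratio
  filter_upwards [hratio.eventually (gt_mem_nhds (by norm_num : (0 : ℝ) < 1 / 2))] with k hk
  have hΓ := Gamma_pos_of_pos (by positivity : 0 < ((k : ℝ) + 1) * β)
  have hΓ' := Gamma_pos_of_pos (by positivity : 0 < ((k : ℝ) + 1) * β + β)
  simp only [Function.comp_apply] at hk
  calc ‖c ^ (k + 1) / Gamma ((((k + 1 : ℕ) : ℝ) + 1) * β)‖
      = |c| * (Gamma (((k : ℝ) + 1) * β) / Gamma (((k : ℝ) + 1) * β + β)) *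
          ‖c ^ k / Gamma (((k : ℝ) + 1) * β)‖ := by
        rw [show (((k + 1 : ℕ) : ℝ) + 1) * β = ((k : ℝ) + 1) * β + β by push_cast; ring,
          norm_div, norm_div, norm_pow, norm_pow, norm_of_nonneg hΓ.le, norm_of_nonneg hΓ'.le,
          Real.norm_eq_abs, pow_succ]
        field_simp
    _ ≤ 1 / 2 * ‖c ^ k / Gamma (((k : ℝ) + 1) * β)‖ := by gcongr

theorem pow_mul_rpow_mul_prod_beta_le {β M δ x T : ℝ} (hβ : 0 < β) (hM : 0 ≤ M) (hδ : 0 < δ)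
    (hδx : δ ≤ x) (hxT : x ≤ T) (k : ℕ) :
    M ^ (k + 1) * x ^ (((k + 1 : ℕ) : ℝ) * β - 1) *
        ∏ j ∈ Finset.Icc 1 (k + 1 - 1), Gamma β * Gamma ((j : ℝ) * β) / Gamma (β + (j : ℝ) * β) ≤
      M * Gamma β * T ^ β / δ * ((M * Gamma β * T ^ β) ^ k / Gamma (((k : ℝ) + 1) * β)) := by
  have hx : 0 < x := hδ.trans_le hδx
  have hT : 0 ≤ T := hx.le.trans hxT
  have hrpow : x ^ (((k + 1 : ℕ) : ℝ) * β - 1) ≤ (T ^ β) ^ (k + 1) / δ := by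
    rw [rpow_sub hx, rpow_one, mul_comm, ← rpow_mul_natCast hT]
    exact div_le_div₀ (by positivity) (rpow_le_rpow hx.le hxT (by positivity)) hδ hδx
  rw [Nat.add_sub_cancel, prod_Icc_beta_eq_Gamma_pow_div_Gamma hβ]
  calc M ^ (k + 1) * x ^ (((k + 1 : ℕ) : ℝ) * β - 1) *
        (Gamma β ^ (k + 1) / Gamma (((k : ℝ) + 1) * β))
      ≤ M ^ (k + 1) * ((T ^ β) ^ (k + 1) / δ) *
        (Gamma β ^ (k + 1) / Gamma (((k : ℝ) + 1) * β)) := by gcongr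
    _ = _ := by ring

theorem stmt_8_general (n : ℕ) (T β M : ℝ)
    (hβ : β ∈ Set.Ioo (0:ℝ) 1) (hM : 0 < M)
    (F : ℕ → ℝ → ℝ → (EuclideanSpace ℝ (Fin n) →L[ℝ] EuclideanSpace ℝ (Fin n)))
    (hFbd : ∀ k ≥ 1, ∀ t s, 0 ≤ s → s < t → t ≤ T →
      ‖F k t s‖ ≤ M ^ k * (t - s) ^ ((k : ℝ) * β - 1) *
        ∏ j ∈ Finset.Icc 1 (k - 1),
          Real.Gamma β * Real.Gamma ((j : ℝ) * β) / Real.Gamma (β + (j : ℝ) * β))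
    (δ : ℝ) (hδ : 0 < δ) :
    (∀ z : ℝ × ℝ, (0 ≤ z.2 ∧ z.2 < z.1 ∧ z.1 ≤ T ∧ δ ≤ z.1 - z.2) →
      Summable (fun k : ℕ => ‖F (k + 1) z.1 z.2‖)) ∧
    TendstoUniformlyOn
      (fun N : ℕ => fun z : ℝ × ℝ => ∑ k ∈ Finset.range N, F (k + 1) z.1 z.2)
      (fun z : ℝ × ℝ => ∑' k : ℕ, F (k + 1) z.1 z.2)
      atTop
      {z : ℝ × ℝ | 0 ≤ z.2 ∧ z.2 < z.1 ∧ z.1 ≤ T ∧ δ ≤ z.1 - z.2} := by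
  obtain ⟨hβ0, hβ1⟩ := hβ
  set c := M * Gamma β * T ^ β
  have hmajorant : ∀ k, ∀ z ∈ {z : ℝ × ℝ | 0 ≤ z.2 ∧ z.2 < z.1 ∧ z.1 ≤ T ∧ δ ≤ z.1 - z.2},
      ‖F (k + 1) z.1 z.2‖ ≤ c / δ * (c ^ k / Gamma (((k : ℝ) + 1) * β)) := by
    rintro k ⟨t, s⟩ ⟨hs, hst, htT, hδts⟩
    exact (hFbd (k + 1) le_add_self t s hs hst htT).trans
      (pow_mul_rpow_mul_prod_beta_le hβ0 hM.le hδ hδts (by linarith) k)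
  have hsum := (summable_pow_div_Gamma_succ_mul c hβ0 hβ1).mul_left (c / δ)
  exact ⟨fun z hz => hsum.of_nonneg_of_le (fun _ => norm_nonneg _) (fun k => hmajorant k z hz),
    tendstoUniformlyOn_tsum_nat hsum hmajorant⟩

/-- Uniform and absolute convergence of the Neumann series Σ_k F_k(t,s) on
    Δ_δ = {(t,s) : 0 ≤ s < t ≤ T, t - s ≥ δ}, given the Beta-function bounds. -/
theorem stmt_8 (n : ℕ) (T β M : ℝ)
    (hT : 0 < T) (hβ : β ∈ Set.Ioo (0:ℝ) 1) (hM : 0 < M)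
    (F : ℕ → ℝ → ℝ → (EuclideanSpace ℝ (Fin n) →L[ℝ] EuclideanSpace ℝ (Fin n)))
    (hFbd : ∀ k ≥ 1, ∀ t s, 0 ≤ s → s < t → t ≤ T →
      ‖F k t s‖ ≤ M ^ k * (t - s) ^ ((k : ℝ) * β - 1) *
        ∏ j ∈ Finset.Icc 1 (k - 1),
          Real.Gamma β * Real.Gamma ((j : ℝ) * β) / Real.Gamma (β + (j : ℝ) * β))
    (δ : ℝ) (hδ : 0 < δ) :
    (∀ z : ℝ × ℝ, (0 ≤ z.2 ∧ z.2 < z.1 ∧ z.1 ≤ T ∧ δ ≤ z.1 - z.2) →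
      Summable (fun k : ℕ => ‖F (k + 1) z.1 z.2‖)) ∧
    TendstoUniformlyOn
      (fun N : ℕ => fun z : ℝ × ℝ => ∑ k ∈ Finset.range N, F (k + 1) z.1 z.2)
      (fun z : ℝ × ℝ => ∑' k : ℕ, F (k + 1) z.1 z.2)
      atTop
      {z : ℝ × ℝ | 0 ≤ z.2 ∧ z.2 < z.1 ∧ z.1 ≤ T ∧ δ ≤ z.1 - z.2} :=
  stmt_8_general n T β M hβ hM F hFbd δ hδ
end
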